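/- arXiv:1502.00854 — 4 statements merged into one kernel-verified Lean document; each statement's English description precedes it below -/
import Mathlib

section
/- Let E be a real Banach space and A, B ≥ 0. Let (λ_p)_{p∈ℤ} be complex numbers with |λ_0| ≤ A and |λ_p| ≤ A/p⁴ for all p ≠ 0, and let (x_q)_{q∈ℤ} be elements of the complexification of E with x_0 = 0 and ‖x_q‖ ≤ B/|q|³ for all q ≠ 0. Then for each n ∈ ℤ the series h_n = ∑_{q∈ℤ} λ_{n−q} x_q converges absolutely, and there exists an absolute constant C such that ‖h_n‖ ≤ C A B / n³ for every integer n ≥ 1. (Convolution estimate at the core of the proof of Lemma 4.1, obtained by splitting the sum over |q| ≥ n/2, 0 < |q| < n/2 and q = n.) -/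
open Real

noncomputable section



def gg : ℤ → ℝ := fun p => if p = 0 then 1 else 1 / (p : ℝ) ^ 4
def ff : ℤ → ℝ := fun q => 1 / |(q : ℝ)| ^ 3

lemma gg_nonneg (p : ℤ) : 0 ≤ gg p := by unfold gg; positivity
lemma ff_nonneg (q : ℤ) : 0 ≤ ff q := by unfold ff; positivity

lemma gg_le_one (p : ℤ) : gg p ≤ 1 := by
  unfold gg
  split
  · exact le_refl _
  · rename_i h
    rw [div_le_one (by positivity)]
    have habs : (1:ℤ) ≤ |p| := Int.one_le_abs h
    have hsq : (1:ℤ) ≤ p ^ 2 := by nlinarith [sq_abs p]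
    have : (1:ℤ) ≤ p ^ 4 := by nlinarith
    exact_mod_cast this

lemma summable_gg : Summable gg := by
  have h1 : Summable fun p : ℤ => 1 / (p : ℝ) ^ 4 :=
    Real.summable_one_div_int_pow.mpr (by norm_num)
  have h2 : Summable fun p : ℤ => if p = 0 then (1:ℝ) else 0 := (hasSum_ite_eq 0 1).summable
  apply (h2.add h1).congr
  intro p
  unfold gg
  rcases eq_or_ne p 0 with h | h <;> simp [h]

lemma summable_ff : Summable ff := by
  apply Summable.of_nat_of_neg
  · apply (Real.summable_one_div_nat_pow.mpr (by norm_num : 1 < 3)).congr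
    intro n
    simp [ff, abs_of_nonneg (by positivity : (0:ℝ) ≤ (n:ℝ))]
  · apply (Real.summable_one_div_nat_pow.mpr (by norm_num : 1 < 3)).congr
    intro n
    have : |((-(n:ℤ) : ℤ) : ℝ)| = (n : ℝ) := by push_cast; simp
    simp [ff, this]

lemma key_pointwise (n q : ℤ) (hn : 1 ≤ n) :
    gg (n - q) * ff q ≤ 16 / (n : ℝ) ^ 3 * (gg (n - q) + ff q) := by
  have hN : (1:ℝ) ≤ (n:ℝ) := by exact_mod_cast hn
  have hN0 : (0:ℝ) < (n:ℝ) := by linarith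
  have hN3 : (0:ℝ) < (n:ℝ)^3 := by positivity
  rcases le_or_gt n (2 * |q|) with h | h
  · -- |q| large: ff q ≤ 8/N³
    have hq0 : q ≠ 0 := by
      intro hq; rw [hq] at h; simp at h; omega
    have ha0 : (0:ℝ) < |(q:ℝ)| := by
      simp only [abs_pos, ne_eq, Int.cast_eq_zero]; exact hq0
    have ha : (n:ℝ) ≤ 2 * |(q:ℝ)| := by
      have : ((n:ℝ)) ≤ ((2 * |q| : ℤ) : ℝ) := by exact_mod_cast h
      rw [Int.cast_mul, Int.cast_abs] at this
      simpa using this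
    have hfN : ff q * (n:ℝ)^3 ≤ 8 := by
      have hcube : (n:ℝ)^3 ≤ 8 * |(q:ℝ)|^3 := by
        nlinarith [pow_le_pow_left₀ (le_of_lt hN0) ha 3]
      unfold ff
      rw [div_mul_eq_mul_div, one_mul, div_le_iff₀ (by positivity)]
      linarith
    have hg0 := gg_nonneg (n - q)
    have hf0 := ff_nonneg q
    rw [div_mul_eq_mul_div, le_div_iff₀ hN3]
    nlinarith [mul_le_mul_of_nonneg_left hfN hg0, gg_le_one (n - q)]
  · -- |q| small: gg (n - q) ≤ 16/N³
    have hq : 2 * |(q:ℝ)| < (n:ℝ) := by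
      have : ((2 * |q| : ℤ) : ℝ) < (n:ℝ) := by exact_mod_cast h
      rw [Int.cast_mul, Int.cast_abs] at this
      simpa using this
    have hnq : n - q ≠ 0 := by
      intro hh
      have : q = n := by omega
      rw [this] at h
      rw [abs_of_pos (by omega : (0:ℤ) < n)] at h
      omega
    have hb : (n:ℝ)/2 < |(n:ℝ) - (q:ℝ)| := by
      have := abs_sub_abs_le_abs_sub ((n:ℝ)) ((q:ℝ))
      rw [abs_of_pos hN0] at this
      linarith
    have hbn : (n:ℝ)^3 ≤ 16 * ((n:ℝ) - (q:ℝ))^4 := by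
      have h4 : ((n:ℝ)/2)^4 ≤ |(n:ℝ) - (q:ℝ)|^4 :=
        pow_le_pow_left₀ (by positivity) (le_of_lt hb) 4
      have habs : |(n:ℝ) - (q:ℝ)|^4 = ((n:ℝ) - (q:ℝ))^4 := by
        rw [← abs_pow, abs_of_nonneg (by positivity)]
      have hNn : (n:ℝ)^3 ≤ (n:ℝ)^4 := pow_le_pow_right₀ hN (by norm_num)
      rw [habs] at h4
      nlinarith
    have hgval : gg (n - q) = 1 / ((n:ℝ) - (q:ℝ))^4 := by
      unfold gg
      rw [if_neg hnq]
      push_cast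
      ring_nf
    have hgle : gg (n - q) * (n:ℝ)^3 ≤ 16 := by
      have hpos : (0:ℝ) < ((n:ℝ) - (q:ℝ))^4 := by
        have h0 : (0:ℝ) < |(n:ℝ) - (q:ℝ)| := lt_trans (by positivity) hb
        have : |(n:ℝ) - (q:ℝ)|^4 = ((n:ℝ) - (q:ℝ))^4 := by
          rw [← abs_pow, abs_of_nonneg (by positivity)]
        rw [← this]; positivity
      rw [hgval, div_mul_eq_mul_div, one_mul, div_le_iff₀ hpos]
      linarith
    have hg0 := gg_nonneg (n - q)
    have hf0 := ff_nonneg q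
    rw [div_mul_eq_mul_div, le_div_iff₀ hN3]
    nlinarith [mul_le_mul_of_nonneg_left hgle hf0]


/-- The convolution estimate at the core of the proof of Lemma 4.1: if |λ₀| ≤ A,
|λ_p| ≤ A/p⁴ (p ≠ 0), x₀ = 0 and ‖x_q‖ ≤ B/|q|³ (q ≠ 0), in a (complexified) Banach
space, then h_n = ∑_q λ_{n−q} x_q converges absolutely and ‖h_n‖ ≤ C·A·B/n³ for n ≥ 1,
with an absolute constant C. -/
theorem convolution_estimate :
    ∃ C : ℝ, 0 < C ∧
    ∀ (F : Type) [inst₁ : NormedAddCommGroup F] [inst₂ : NormedSpace ℂ F]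
      [inst₃ : CompleteSpace F]
      (A B : ℝ) (lam : ℤ → ℂ) (x : ℤ → F),
      0 ≤ A → 0 ≤ B →
      ‖lam 0‖ ≤ A → (∀ p : ℤ, p ≠ 0 → ‖lam p‖ ≤ A / (p : ℝ) ^ 4) →
      x 0 = 0 → (∀ q : ℤ, q ≠ 0 → ‖x q‖ ≤ B / |(q : ℝ)| ^ 3) →
      (∀ n : ℤ, Summable fun q : ℤ => ‖lam (n - q) • x q‖) ∧
      (∀ n : ℤ, 1 ≤ n → ‖∑' q : ℤ, lam (n - q) • x q‖ ≤ C * A * B / (n : ℝ) ^ 3) := by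
  have hS0 : 0 ≤ ∑' p : ℤ, gg p := tsum_nonneg gg_nonneg
  have hT0 : 0 ≤ ∑' q : ℤ, ff q := tsum_nonneg ff_nonneg
  set S := ∑' p : ℤ, gg p with hS
  set T := ∑' q : ℤ, ff q with hT
  refine ⟨16 * (S + T) + 1, by linarith, ?_⟩
  intro F _ _ _ A B lam x hA hB hl0 hlp hx0 hxq
  have hlam : ∀ p : ℤ, ‖lam p‖ ≤ A * gg p := by
    intro p
    rcases eq_or_ne p 0 with h | h
    · rw [h]; simpa [gg] using hl0
    · rw [show gg p = 1 / (p:ℝ)^4 from if_neg h, mul_one_div]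
      exact hlp p h
  have hx : ∀ q : ℤ, ‖x q‖ ≤ B * ff q := by
    intro q
    rcases eq_or_ne q 0 with h | h
    · rw [h, hx0]; simp [ff]
    · rw [show ff q = 1 / |(q:ℝ)|^3 from rfl, mul_one_div]
      exact hxq q h
  have hnorm : ∀ n q : ℤ, ‖lam (n - q) • x q‖ ≤ A * B * (gg (n - q) * ff q) := by
    intro n q
    rw [norm_smul]
    calc ‖lam (n - q)‖ * ‖x q‖ ≤ (A * gg (n - q)) * (B * ff q) := by
          exact mul_le_mul (hlam _) (hx _) (norm_nonneg _)
            (mul_nonneg hA (gg_nonneg _))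
      _ = A * B * (gg (n - q) * ff q) := by ring
  have hsum : ∀ n : ℤ, Summable fun q : ℤ => ‖lam (n - q) • x q‖ := by
    intro n
    refine Summable.of_nonneg_of_le (fun q => norm_nonneg _)
      (fun q => ?_) (summable_ff.mul_left (A * B))
    refine le_trans (hnorm n q) ?_
    exact mul_le_mul_of_nonneg_left
      (mul_le_of_le_one_left (ff_nonneg q) (gg_le_one _)) (mul_nonneg hA hB)
  refine ⟨hsum, ?_⟩
  intro n hn
  have hN3 : (0:ℝ) < (n:ℝ)^3 := by
    have : (0:ℝ) < (n:ℝ) := by exact_mod_cast lt_of_lt_of_le zero_lt_one hn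
    positivity
  have hgn : Summable fun q : ℤ => gg (n - q) :=
    summable_gg.comp_injective (fun a b hab => by omega)
  have hRHS : Summable fun q : ℤ => A * B * (16 / (n:ℝ)^3 * (gg (n - q) + ff q)) :=
    ((hgn.add summable_ff).mul_left _).mul_left _
  calc ‖∑' q : ℤ, lam (n - q) • x q‖ ≤ ∑' q : ℤ, ‖lam (n - q) • x q‖ :=
        norm_tsum_le_tsum_norm (hsum n)
    _ ≤ ∑' q : ℤ, A * B * (16 / (n:ℝ)^3 * (gg (n - q) + ff q)) := by
        apply Summable.tsum_le_tsum ?_ (hsum n) hRHS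
        intro q
        refine le_trans (hnorm n q) ?_
        exact mul_le_mul_of_nonneg_left (key_pointwise n q hn) (by positivity)
    _ = A * B * (16 / (n:ℝ)^3 * ((∑' q : ℤ, gg (n - q)) + T)) := by
        rw [tsum_mul_left, tsum_mul_left, Summable.tsum_add hgn summable_ff]
    _ = A * B * (16 / (n:ℝ)^3 * (S + T)) := by
        rw [show (∑' q : ℤ, gg (n - q)) = S from (Equiv.subLeft n).tsum_eq gg]
    _ ≤ (16 * (S + T) + 1) * A * B / (n:ℝ)^3 := by
        rw [show A * B * (16 / (n:ℝ)^3 * (S + T)) = (16 * (S + T)) * A * B / (n:ℝ)^3 by ring]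
        gcongr
        nlinarith [mul_nonneg hA hB]
end
end

section
/- Let M ≥ 0 and let (f_p)_{p≥1} be a sequence in L¹(S₂,μ) with ‖f_p‖_{L¹(S₂,μ)} ≤ M/p³ for all p ≥ 1, and set f(s) = ∑_{p≥1} f_p H_p(s) (absolutely and uniformly convergent in L¹(S₂,μ)). Then there exists an absolute constant C such that for every integer N ≥ 1: ‖∫₀¹ f(s) cos(Nπs) ds‖_{L¹(S₂,μ)} ≤ C M / N². (Lemma 6.2 of the paper, with M = ‖f‖_{X₁}.) -/
/-! Since `∑ ‖f_p‖_{L¹} < ∞`, the series converges absolutely for a.e. `u`, so the `s`-integral can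
be taken termwise and `‖∫₀¹ f(s) cos(Nπs) ds‖_{L¹} ≤ ∑ ‖f_p‖_{L¹} |c_p|` with
`c_p = ∫₀¹ H_p(s) cos(Nπs) ds`. For `p ≠ N`, `c_p = √2 p (1 - (-1)^{p+N}) / (π (p² - N²))`, and
`∑_p |c_p| / p³ = O(1/N²)`. -/

open MeasureTheory Real Set

noncomputable section

/-- Euclidean space ℝ³. -/
abbrev E3 : Type := EuclideanSpace ℝ (Fin 3)

/-- The unit sphere S₂ in ℝ³. -/
def S2 : Set E3 := Metric.sphere (0 : E3) 1

/-- The surface measure on S₂: the 2-dimensional Hausdorff measure restricted to S₂. -/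
def mu : Measure E3 := (μH[2]).restrict S2

/-- The quadratic form κ:u⊗u = ⟨u, κu⟩. -/
def quadForm (κ : Matrix (Fin 3) (Fin 3) ℝ) (u : E3) : ℝ :=
  ∑ i, ∑ j, κ i j * u i * u j

/-- The tangent vector field 𝒢(u) = κu − (κ:u⊗u)u. -/
def Gvec (κ : Matrix (Fin 3) (Fin 3) ℝ) (u : E3) : E3 :=
  (EuclideanSpace.equiv (Fin 3) ℝ).symm (fun i => (∑ j, κ i j * u j) - quadForm κ u * u i)

/-- H_p(s) = √2 sin(pπs). -/
def Hfun (p : ℕ) (s : ℝ) : ℝ := Real.sqrt 2 * Real.sin ((p : ℝ) * π * s)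

section SeriesOfIntegrableFunctions

variable {X ι E F : Type*} [MeasurableSpace X] {μ : Measure X} [NormedAddCommGroup E]
  [NormedAddCommGroup F] {G : ι → X → E}

lemma tsum_lintegral_enorm_eq_ofReal (hG : ∀ i, Integrable (G i) μ)
    (hs : Summable fun i => ∫ x, ‖G i x‖ ∂μ) :
    ∑' i, ∫⁻ x, ‖G i x‖ₑ ∂μ = ENNReal.ofReal (∑' i, ∫ x, ‖G i x‖ ∂μ) := by
  rw [ENNReal.ofReal_tsum_of_nonneg (fun i => integral_nonneg fun x => norm_nonneg _) hs]
  exact tsum_congr fun i => (ofReal_integral_norm_eq_lintegral_enorm (hG i)).symm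

lemma ae_summable_norm_of_summable_integral_norm [Countable ι] (hG : ∀ i, Integrable (G i) μ)
    (hs : Summable fun i => ∫ x, ‖G i x‖ ∂μ) :
    ∀ᵐ x ∂μ, Summable fun i => ‖G i x‖ := by
  refine summable_norm_of_tsum_eLpNorm_ne_top le_rfl (fun i => (hG i).aestronglyMeasurable) ?_
  simp_rw [eLpNorm_one_eq_lintegral_enorm, tsum_lintegral_enorm_eq_ofReal hG hs]
  exact ENNReal.ofReal_ne_top

lemma integral_norm_le_tsum_integral_norm [Countable ι] {f : X → F} (hG : ∀ i, Integrable (G i) μ)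
    (hs : Summable fun i => ∫ x, ‖G i x‖ ∂μ) (hf : ∀ᵐ x ∂μ, ‖f x‖ ≤ ∑' i, ‖G i x‖) :
    ∫ x, ‖f x‖ ∂μ ≤ ∑' i, ∫ x, ‖G i x‖ ∂μ := by
  have hlin : ∫⁻ x, ENNReal.ofReal ‖f x‖ ∂μ ≤ ∑' i, ∫⁻ x, ‖G i x‖ₑ ∂μ := by
    rw [← lintegral_tsum fun i => (hG i).aestronglyMeasurable.enorm]
    refine lintegral_mono_ae ?_
    filter_upwards [hf] with x hx
    calc ENNReal.ofReal ‖f x‖ ≤ ENNReal.ofReal (∑' i, ‖G i x‖) := ENNReal.ofReal_le_ofReal hx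
      _ = ENNReal.ofReal (∑' i, ‖G i x‖ₑ).toReal := by
          rw [ENNReal.tsum_toReal_eq fun _ => enorm_ne_top]; simp
      _ ≤ ∑' i, ‖G i x‖ₑ := ENNReal.ofReal_toReal_le
  calc ∫ x, ‖f x‖ ∂μ ≤ (∫⁻ x, ENNReal.ofReal ‖f x‖ ∂μ).toReal := by
        simpa using (le_abs_self _).trans (norm_integral_le_lintegral_norm fun x => ‖f x‖)
    _ ≤ (ENNReal.ofReal (∑' i, ∫ x, ‖G i x‖ ∂μ)).toReal :=
        ENNReal.toReal_mono ENNReal.ofReal_ne_top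
          (hlin.trans_eq (tsum_lintegral_enorm_eq_ofReal hG hs))
    _ = ∑' i, ∫ x, ‖G i x‖ ∂μ :=
        ENNReal.toReal_ofReal (tsum_nonneg fun i => integral_nonneg fun x => norm_nonneg _)

end SeriesOfIntegrableFunctions

section IntervalIntegralOfSeries

variable {ι : Type*} [Countable ι] {a : ι → ℝ} {φ : ι → ℝ → ℝ} {B α β : ℝ}

lemma hasSum_mul_intervalIntegral (ha : Summable fun i => ‖a i‖) (hφ : ∀ i, Continuous (φ i))
    (hB : ∀ i t, ‖φ i t‖ ≤ B) :
    HasSum (fun i => a i * ∫ t in α..β, φ i t) (∫ t in α..β, ∑' i, a i * φ i t) := by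
  have hdom : ∀ i t, ‖a i * φ i t‖ ≤ ‖a i‖ * B := fun i t => by
    rw [norm_mul]; gcongr; exact hB i t
  simp_rw [← intervalIntegral.integral_const_mul]
  exact intervalIntegral.hasSum_integral_of_dominated_convergence (fun i _ => ‖a i‖ * B)
    (fun i => (continuous_const.mul (hφ i)).aestronglyMeasurable)
    (fun i => ae_of_all _ fun t _ => hdom i t) (ae_of_all _ fun _ _ => ha.mul_right B)
    intervalIntegrable_const
    (ae_of_all _ fun t _ => ((ha.mul_right B).of_norm_bounded (hdom · t)).hasSum)

lemma norm_intervalIntegral_tsum_mul_le (ha : Summable fun i => ‖a i‖)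
    (hφ : ∀ i, Continuous (φ i)) (hB : ∀ i t, ‖φ i t‖ ≤ B) :
    ‖∫ t in α..β, ∑' i, a i * φ i t‖ ≤ ∑' i, ‖a i * ∫ t in α..β, φ i t‖ := by
  rw [← (hasSum_mul_intervalIntegral ha hφ hB).tsum_eq]
  refine norm_tsum_le_tsum_norm ((ha.mul_right (B * |β - α|)).of_nonneg_of_le
    (fun i => norm_nonneg _) fun i => ?_)
  rw [norm_mul]
  gcongr
  exact intervalIntegral.norm_integral_le_of_norm_le_const fun t _ => hB i t

end IntervalIntegralOfSeries

lemma integral_sin_mul_left {c : ℝ} (hc : c ≠ 0) :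
    ∫ s in (0:ℝ)..1, sin (c * s) = (1 - cos c) / c := by
  rw [intervalIntegral.integral_comp_mul_left (fun x => sin x) hc, integral_sin]
  simp [field]

def cosCoeff (N p : ℕ) : ℝ := ∫ s in (0:ℝ)..1, Hfun p s * cos (N * π * s)

lemma abs_Hfun_mul_cos_le (N p : ℕ) (s : ℝ) : |Hfun p s * cos (N * π * s)| ≤ √2 := by
  have hsin := abs_sin_le_one (p * π * s)
  have hcos := abs_cos_le_one (N * π * s)
  rw [Hfun, abs_mul, abs_mul, abs_of_nonneg (sqrt_nonneg 2)]
  calc √2 * |sin (p * π * s)| * |cos (N * π * s)| ≤ √2 * 1 * 1 := by gcongr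
    _ = √2 := by ring

lemma continuous_Hfun_mul_cos (N p : ℕ) : Continuous fun s => Hfun p s * cos (N * π * s) := by
  unfold Hfun; fun_prop

lemma abs_cosCoeff_le (N p : ℕ) : |cosCoeff N p| ≤ √2 := by
  simpa [cosCoeff] using intervalIntegral.norm_integral_le_of_norm_le_const (a := 0) (b := 1)
    fun s _ => (Real.norm_eq_abs _).trans_le (abs_Hfun_mul_cos_le N p s)

lemma cosCoeff_eq {N p : ℕ} (hpN : p ≠ N) :
    cosCoeff N p = √2 * p * (1 - cos ((p + N) * π)) / (π * (p ^ 2 - N ^ 2)) := by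
  have hsub : (p : ℝ) - N ≠ 0 := sub_ne_zero.mpr (by exact_mod_cast hpN)
  have hadd : (p : ℝ) + N ≠ 0 := by exact_mod_cast (by omega : p + N ≠ 0)
  have hprod : ∀ s : ℝ, Hfun p s * cos (N * π * s)
      = √2 / 2 * (sin ((p - N) * π * s) + sin ((p + N) * π * s)) := by
    intro s
    rw [Hfun, sub_mul, sub_mul, add_mul, add_mul, sin_sub, sin_add]
    ring
  -- `(p - N)π` and `(p + N)π` differ by `2Nπ`
  have hcos : cos ((p - N) * π) = cos ((p + N) * π) := by
    rw [← cos_add_nat_mul_two_pi _ N]; ring_nf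
  have hint : ∀ c : ℝ, IntervalIntegrable (fun s => sin (c * s)) volume 0 1 :=
    fun c => (by fun_prop : Continuous fun s => sin (c * s)).intervalIntegrable 0 1
  rw [cosCoeff, intervalIntegral.integral_congr fun s _ => hprod s,
    intervalIntegral.integral_const_mul, intervalIntegral.integral_add (hint _) (hint _),
    integral_sin_mul_left (mul_ne_zero hsub pi_ne_zero),
    integral_sin_mul_left (mul_ne_zero hadd pi_ne_zero), hcos]
  have hsq : (p : ℝ) ^ 2 - N ^ 2 = (p - N) * (p + N) := by ring
  rw [hsq]
  field_simp
  ring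

lemma abs_cosCoeff_le_of_ne {N p : ℕ} (hpN : p ≠ N) :
    |cosCoeff N p| ≤ p / |(p : ℝ) ^ 2 - N ^ 2| := by
  have h2 : |1 - cos ((p + N) * π)| ≤ 2 := by
    rw [abs_le]; constructor <;> linarith [cos_le_one ((p + N) * π), neg_one_le_cos ((p + N) * π)]
  have hconst : √2 * |1 - cos ((p + N) * π)| / π ≤ 1 := by
    rw [div_le_one pi_pos]
    nlinarith [sqrt_two_lt_three_halves, pi_gt_three, abs_nonneg (1 - cos ((p + N) * π)),
      sqrt_nonneg 2]
  calc |cosCoeff N p|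
      = √2 * |1 - cos ((p + N) * π)| / π * (p / |(p : ℝ) ^ 2 - N ^ 2|) := by
        rw [cosCoeff_eq hpN, abs_div, abs_mul, abs_mul, abs_mul, abs_of_pos pi_pos,
          abs_of_nonneg (sqrt_nonneg 2), Nat.abs_cast]
        ring
    _ ≤ 1 * (p / |(p : ℝ) ^ 2 - N ^ 2|) := by gcongr
    _ = p / |(p : ℝ) ^ 2 - N ^ 2| := one_mul _

/-- Far from `N` (`N ≤ 2|p - N|`) the decay `p / |p² - N²|` of `cosCoeff N p` gives `2 / (N²p²)`;
near `N` the trivial bound `√2` suffices, since then `N < 2p` and `p < 2N`. -/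
lemma abs_cosCoeff_div_pow_three_le {N : ℕ} (hN : 1 ≤ N) (p : ℕ) :
    |cosCoeff N p| / p ^ 3
      ≤ 2 / N ^ 2 * (1 / p ^ 2) + if p < 2 * N then (12 : ℝ) / N ^ 3 else 0 := by
  have hite : 0 ≤ if p < 2 * N then (12 : ℝ) / N ^ 3 else 0 := by positivity
  rcases Nat.eq_zero_or_pos p with rfl | hp
  · simpa using hite
  have hNR : (1 : ℝ) ≤ N := by exact_mod_cast hN
  by_cases hfar : (N : ℝ) ≤ 2 * |(p : ℝ) - N|
  · have hpN : p ≠ N := by rintro rfl; simp at hfar; linarith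
    have hD : (N : ℝ) ^ 2 ≤ 2 * |(p : ℝ) ^ 2 - N ^ 2| := by
      rw [show (p : ℝ) ^ 2 - N ^ 2 = (p - N) * (p + N) by ring, abs_mul,
        abs_of_pos (by positivity : (0 : ℝ) < p + N)]
      nlinarith [abs_nonneg ((p : ℝ) - N)]
    have hDpos : (0 : ℝ) < |(p : ℝ) ^ 2 - N ^ 2| := by nlinarith
    calc |cosCoeff N p| / p ^ 3 ≤ p / |(p : ℝ) ^ 2 - N ^ 2| / p ^ 3 := by
          gcongr; exact abs_cosCoeff_le_of_ne hpN
      _ = 1 / (p ^ 2 * |(p : ℝ) ^ 2 - N ^ 2|) := by field_simp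
      _ ≤ 2 / N ^ 2 * (1 / p ^ 2) := by
          rw [div_mul_div_comm, div_le_div_iff₀ (by positivity) (by positivity)]
          nlinarith [sq_nonneg (p : ℝ)]
      _ ≤ _ := le_add_of_nonneg_right hite
  · push Not at hfar
    have hNp : (N : ℝ) < 2 * p := by linarith [neg_abs_le ((p : ℝ) - N)]
    have hpN : p < 2 * N := by
      have : (p : ℝ) < 2 * N := by linarith [le_abs_self ((p : ℝ) - N)]
      exact_mod_cast this
    have hcube : (N : ℝ) ^ 3 < 8 * p ^ 3 := by
      have := pow_lt_pow_left₀ hNp (by positivity) (by norm_num : 3 ≠ 0); nlinarith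
    rw [if_pos hpN]
    calc |cosCoeff N p| / p ^ 3 ≤ √2 / p ^ 3 := by gcongr; exact abs_cosCoeff_le N p
      _ ≤ (12 : ℝ) / N ^ 3 := by
          rw [div_le_div_iff₀ (by positivity) (by positivity)]
          nlinarith [mul_le_mul_of_nonneg_right sqrt_two_lt_three_halves.le
            (by positivity : (0 : ℝ) ≤ N ^ 3)]
      _ ≤ _ := le_add_of_nonneg_left (by positivity)

lemma hasSum_cosCoeff_majorant (N : ℕ) :
    HasSum (fun p : ℕ => 2 / N ^ 2 * (1 / p ^ 2) + if p < 2 * N then (12 : ℝ) / N ^ 3 else 0)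
      (2 / N ^ 2 * (π ^ 2 / 6) + 2 * N * (12 / N ^ 3)) := by
  refine (hasSum_zeta_two.mul_left _).add ?_
  have hfin : ∑ p ∈ Finset.range (2 * N), (if p < 2 * N then (12 : ℝ) / N ^ 3 else 0)
      = 2 * N * (12 / N ^ 3) := by
    rw [Finset.sum_ite_of_true fun p hp => Finset.mem_range.mp hp]
    simp
  exact hfin ▸ hasSum_sum_of_ne_finset_zero fun p hp => by simp_all

lemma summable_abs_cosCoeff_div_pow_three {N : ℕ} (hN : 1 ≤ N) :
    Summable fun p : ℕ => |cosCoeff N p| / p ^ 3 :=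
  (hasSum_cosCoeff_majorant N).summable.of_nonneg_of_le (fun p => by positivity)
    (abs_cosCoeff_div_pow_three_le hN)

lemma tsum_abs_cosCoeff_div_pow_three_le {N : ℕ} (hN : 1 ≤ N) :
    ∑' p : ℕ, |cosCoeff N p| / p ^ 3 ≤ 28 / N ^ 2 := by
  have hpi : π ^ 2 ≤ 12 := by nlinarith [pi_lt_d2, pi_pos]
  calc ∑' p : ℕ, |cosCoeff N p| / p ^ 3
      ≤ 2 / N ^ 2 * (π ^ 2 / 6) + 2 * N * (12 / N ^ 3) :=
        hasSum_le (abs_cosCoeff_div_pow_three_le hN)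
          (summable_abs_cosCoeff_div_pow_three hN).hasSum (hasSum_cosCoeff_majorant N)
    _ = (π ^ 2 / 3 + 24) / N ^ 2 := by field_simp; ring
    _ ≤ 28 / N ^ 2 := by gcongr; linarith

theorem integral_abs_intervalIntegral_tsum_Hfun_mul_cos_le {X : Type*} [MeasurableSpace X]
    {μ : Measure X} {M : ℝ} {g : ℕ → X → ℝ} (hM : 0 ≤ M) (hg : ∀ p, Integrable (g p) μ)
    (hgM : ∀ p, ∫ u, |g p u| ∂μ ≤ M / p ^ 3) {N : ℕ} (hN : 1 ≤ N) :
    ∫ u, |∫ s in (0:ℝ)..1, ∑' p, g p u * (Hfun p s * cos (N * π * s))| ∂μ ≤ 28 * M / N ^ 2 := by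
  have hMp : Summable fun p : ℕ => M / p ^ 3 := by
    simpa [div_eq_mul_inv] using (summable_nat_pow_inv.mpr (by norm_num : 1 < 3)).mul_left M
  have hg_sum : ∀ᵐ u ∂μ, Summable fun p => ‖g p u‖ :=
    ae_summable_norm_of_summable_integral_norm hg <| hMp.of_nonneg_of_le
      (fun p => integral_nonneg fun u => norm_nonneg _) (by simpa only [Real.norm_eq_abs] using hgM)
  have hterm : ∀ p, ∫ u, ‖g p u * cosCoeff N p‖ ∂μ ≤ M * (|cosCoeff N p| / p ^ 3) := fun p => by
    simp only [norm_mul, Real.norm_eq_abs, integral_mul_const]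
    calc (∫ u, |g p u| ∂μ) * |cosCoeff N p| ≤ M / p ^ 3 * |cosCoeff N p| := by gcongr; exact hgM p
      _ = M * (|cosCoeff N p| / p ^ 3) := by ring
  have hsum := (summable_abs_cosCoeff_div_pow_three hN).mul_left M
  calc ∫ u, |∫ s in (0:ℝ)..1, ∑' p, g p u * (Hfun p s * cos (N * π * s))| ∂μ
      ≤ ∑' p, ∫ u, ‖g p u * cosCoeff N p‖ ∂μ := by
        refine integral_norm_le_tsum_integral_norm (F := ℝ) (fun p => (hg p).mul_const _)
          (hsum.of_nonneg_of_le (fun p => integral_nonneg fun u => norm_nonneg _) hterm) ?_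
        filter_upwards [hg_sum] with u hu
        exact norm_intervalIntegral_tsum_mul_le hu (continuous_Hfun_mul_cos N)
          (fun p s => (Real.norm_eq_abs _).trans_le (abs_Hfun_mul_cos_le N p s))
    _ ≤ ∑' p, M * (|cosCoeff N p| / p ^ 3) :=
        Summable.tsum_le_tsum hterm
          (hsum.of_nonneg_of_le (fun p => integral_nonneg fun u => norm_nonneg _) hterm) hsum
    _ = M * ∑' p, |cosCoeff N p| / p ^ 3 := tsum_mul_left
    _ ≤ M * (28 / N ^ 2) := by gcongr; exact tsum_abs_cosCoeff_div_pow_three_le hN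
    _ = 28 * M / N ^ 2 := by ring

/-- Lemma 6.2: if ‖f_p‖_{L¹(S₂)} ≤ M/p³ and f(s) = ∑ f_p H_p(s), then
‖∫₀¹ f(s) cos(Nπs) ds‖_{L¹(S₂)} ≤ C M / N² for an absolute constant C. -/
theorem cos_coefficient_estimate :
    ∃ C : ℝ, 0 < C ∧
    ∀ (M : ℝ) (fp : ℕ → E3 → ℝ), 0 ≤ M →
      (∀ p : ℕ, 1 ≤ p → Integrable (fp p) mu ∧ ∫ u, |fp p u| ∂mu ≤ M / (p : ℝ) ^ 3) →
      ∀ N : ℕ, 1 ≤ N →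
        ∫ u, |∫ s in (0:ℝ)..1, (∑' p : ℕ, fp p u * Hfun p s) * Real.cos ((N : ℝ) * π * s)| ∂mu
          ≤ C * M / (N : ℝ) ^ 2 := by
  refine ⟨28, by norm_num, fun M fp hM hfp N hN => ?_⟩
  -- `fp 0` need not be integrable, but it only ever meets `Hfun 0 = 0`
  let g : ℕ → E3 → ℝ := fun p => if p = 0 then 0 else fp p
  have hfg : ∀ u s, (∑' p, fp p u * Hfun p s) * cos (N * π * s)
      = ∑' p, g p u * (Hfun p s * cos (N * π * s)) := fun u s => by
    rw [← tsum_mul_right]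
    refine tsum_congr fun p => ?_
    rcases eq_or_ne p 0 with rfl | hp
    · simp [g, Hfun]
    · simp [g, hp, mul_assoc]
  have hg : ∀ p, Integrable (g p) mu ∧ ∫ u, |g p u| ∂mu ≤ M / p ^ 3 := fun p => by
    rcases eq_or_ne p 0 with rfl | hp
    · simp [g]
    · simpa [g, hp] using hfp p (by omega)
  simp_rw [hfg]
  exact integral_abs_intervalIntegral_tsum_Hfun_mul_cos_le hM (fun p => (hg p).1)
    (fun p => (hg p).2) hN
end
end

section
/- There exists a constant C > 0 such that for every integer N ≥ 1: ∑_{p≥1, p≠N} 1/(p² |p² − N²|) ≤ C / N². (Key arithmetic series estimate in the proof of Lemma 6.2, obtained by splitting the sum over 1 ≤ |p−N| < N/2, 1 ≤ p ≤ N/2, and p ≥ 3N/2.) -/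
open Real

/-- Key arithmetic series estimate in the proof of Lemma 6.2:
∑_{p≥1, p≠N} 1/(p²|p² − N²|) ≤ C/N².  (The p = 0 term of the tsum below vanishes,
since its denominator is 0 and division by zero is 0 in Lean.) -/
theorem series_estimate :
    ∃ C : ℝ, 0 < C ∧
      ∀ N : ℕ, 1 ≤ N →
        (∑' p : ℕ, if p = N then 0 else
            1 / ((p : ℝ) ^ 2 * |(p : ℝ) ^ 2 - (N : ℝ) ^ 2|))
          ≤ C / (N : ℝ) ^ 2 := by
  refine ⟨8, by norm_num, ?_⟩
  intro N hN
  have hN0 : (0:ℝ) < (N:ℝ) := by exact_mod_cast hN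
  set f : ℕ → ℝ := fun p => if p = N then 0 else
      1 / ((p : ℝ) ^ 2 * |(p : ℝ) ^ 2 - (N : ℝ) ^ 2|) with hf
  set g : ℕ → ℝ := fun p =>
      2/(N:ℝ)^2 * (1/(p:ℝ)^2) + (if p < 2*N then 2/(N:ℝ)^3 else 0) with hg
  have hg_nonneg : ∀ p, 0 ≤ g p := by
    intro p
    have h1 : (0:ℝ) ≤ (if p < 2*N then 2/(N:ℝ)^3 else 0) := by positivity
    have h2 : (0:ℝ) ≤ 2/(N:ℝ)^2 * (1/(p:ℝ)^2) := by positivity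
    simp only [hg]; linarith
  have hf_nonneg : ∀ p, 0 ≤ f p := by
    intro p
    simp only [hf]
    split <;> positivity
  have hfg : ∀ p, f p ≤ g p := by
    intro p
    by_cases hpN : p = N
    · simpa [hf, hpN] using hg_nonneg p
    by_cases hp0 : p = 0
    · subst hp0
      simpa [hf, hpN] using hg_nonneg 0
    have hp1 : 1 ≤ p := Nat.one_le_iff_ne_zero.mpr hp0
    have hp0' : (0:ℝ) < (p:ℝ) := by exact_mod_cast hp1
    have hpa : (0:ℝ) < (p:ℝ)^2 := by positivity
    have hpne : ((p:ℝ))^2 ≠ (N:ℝ)^2 := by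
      intro h
      rcases Nat.lt_or_ge p N with hlt | hge
      · have : (p:ℝ) < N := by exact_mod_cast hlt
        nlinarith
      · have hgt : N < p := by omega
        have : (N:ℝ) < p := by exact_mod_cast hgt
        nlinarith
    have hbpos : (0:ℝ) < |(p:ℝ)^2 - (N:ℝ)^2| := abs_pos.mpr (sub_ne_zero.mpr hpne)
    simp only [hf, hg, if_neg hpN]
    by_cases hbig : (N:ℝ)^2/2 ≤ |(p:ℝ)^2 - (N:ℝ)^2|
    · have h1 : 1 / ((p:ℝ)^2 * |(p:ℝ)^2 - (N:ℝ)^2|) ≤ 1 / ((p:ℝ)^2 * ((N:ℝ)^2/2)) := by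
        apply one_div_le_one_div_of_le
        · positivity
        · exact mul_le_mul_of_nonneg_left hbig (le_of_lt hpa)
      have h2 : 1 / ((p:ℝ)^2 * ((N:ℝ)^2/2)) = 2/(N:ℝ)^2 * (1/(p:ℝ)^2) := by
        field_simp
      have h3 : (0:ℝ) ≤ (if p < 2*N then 2/(N:ℝ)^3 else 0) := by positivity
      have h12 := h1.trans h2.le
      linarith
    push_neg at hbig
    have hpa2 : (N:ℝ)^2/2 < (p:ℝ)^2 := by
      rcases abs_lt.mp hbig with ⟨ha, hb⟩
      nlinarith
    have hplt : p < 2*N := by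
      by_contra h
      push_neg at h
      have h2 : (2*(N:ℝ)) ≤ (p:ℝ) := by exact_mod_cast h
      rcases abs_lt.mp hbig with ⟨ha, hb⟩
      nlinarith
    have honele : (1:ℝ) ≤ |(p:ℝ) - (N:ℝ)| := by
      have hz : ((p:ℤ) - (N:ℤ)) ≠ 0 := by
        intro h; apply hpN; omega
      have h1 : (1:ℤ) ≤ |(p:ℤ) - (N:ℤ)| := Int.one_le_abs hz
      have h2 : ((|(p:ℤ) - (N:ℤ)| : ℤ) : ℝ) = |(p:ℝ) - (N:ℝ)| := by
        push_cast [Int.cast_abs]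
        ring_nf
      rw [← h2]
      exact_mod_cast h1
    have hfact : |(p:ℝ)^2 - (N:ℝ)^2| = ((p:ℝ) + (N:ℝ)) * |(p:ℝ) - (N:ℝ)| := by
      rw [sq_sub_sq, abs_mul, abs_of_nonneg (by positivity : (0:ℝ) ≤ (p:ℝ) + (N:ℝ))]
    have hbge : (N:ℝ) ≤ |(p:ℝ)^2 - (N:ℝ)^2| := by
      rw [hfact]
      nlinarith
    have hterm : 1 / ((p:ℝ)^2 * |(p:ℝ)^2 - (N:ℝ)^2|) ≤ 2/(N:ℝ)^3 := by
      have h1 : 1 / ((p:ℝ)^2 * |(p:ℝ)^2 - (N:ℝ)^2|) ≤ 1 / (((N:ℝ)^2/2) * (N:ℝ)) := by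
        apply one_div_le_one_div_of_le
        · positivity
        · exact mul_le_mul (le_of_lt hpa2) hbge (by positivity) (by positivity)
      have h2 : 1 / (((N:ℝ)^2/2) * (N:ℝ)) = 2/(N:ℝ)^3 := by
        field_simp
      exact h1.trans h2.le
    have h3 : (0:ℝ) ≤ 2/(N:ℝ)^2 * (1/(p:ℝ)^2) := by positivity
    rw [if_pos hplt]
    linarith
  have hsum1 : Summable (fun p : ℕ => 2/(N:ℝ)^2 * (1/(p:ℝ)^2)) := by
    have := (Real.summable_one_div_nat_pow (p := 2)).mpr one_lt_two
    exact this.mul_left _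
  have hsum2 : Summable (fun p : ℕ => if p < 2*N then 2/(N:ℝ)^3 else 0) := by
    apply summable_of_ne_finset_zero (s := Finset.range (2*N))
    intro p hp
    simp only [Finset.mem_range] at hp
    simp [hp]
  have hg_sum : Summable g := hsum1.add hsum2
  have hf_sum : Summable f := Summable.of_nonneg_of_le hf_nonneg hfg hg_sum
  have h1 : (∑' p, f p) ≤ ∑' p, g p := Summable.tsum_le_tsum hfg hf_sum hg_sum
  have h2 : (∑' p, g p) = 2/(N:ℝ)^2 * (∑' p : ℕ, 1/(p:ℝ)^2)
      + ∑' p : ℕ, (if p < 2*N then 2/(N:ℝ)^3 else 0) := by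
    rw [hg, Summable.tsum_add hsum1 hsum2, tsum_mul_left]
  have hzeta : (∑' p : ℕ, 1/(p:ℝ)^2) ≤ 2 := by
    rw [hasSum_zeta_two.tsum_eq]
    nlinarith [Real.pi_lt_d2, Real.pi_pos]
  have h3 : (∑' p : ℕ, (if p < 2*N then 2/(N:ℝ)^3 else 0)) = 2*(N:ℝ) * (2/(N:ℝ)^3) := by
    rw [tsum_eq_sum (s := Finset.range (2*N))
      (by intro p hp; simp only [Finset.mem_range] at hp; simp [hp])]
    have hc : ∀ q ∈ Finset.range (2*N),
        (if q < 2*N then 2/(N:ℝ)^3 else 0) = 2/(N:ℝ)^3 := by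
      intro q hq; simp [Finset.mem_range.mp hq]
    rw [Finset.sum_congr rfl hc, Finset.sum_const, Finset.card_range, nsmul_eq_mul]
    push_cast; ring
  have h4 : 2*(N:ℝ) * (2/(N:ℝ)^3) = 4/(N:ℝ)^2 := by
    field_simp; ring
  have h5 : (0:ℝ) ≤ 2/(N:ℝ)^2 := by positivity
  have h6 : 2/(N:ℝ)^2 * (∑' p : ℕ, 1/(p:ℝ)^2) ≤ 2/(N:ℝ)^2 * 2 :=
    mul_le_mul_of_nonneg_left hzeta h5
  have h7 : 2/(N:ℝ)^2 * 2 + 4/(N:ℝ)^2 = 8/(N:ℝ)^2 := by ring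
  calc (∑' p, f p) ≤ ∑' p, g p := h1
    _ = 2/(N:ℝ)^2 * (∑' p : ℕ, 1/(p:ℝ)^2) + 4/(N:ℝ)^2 := by rw [h2, h3, h4]
    _ ≤ 8/(N:ℝ)^2 := by linarith
end

section
/- Let K ≥ 0, let (a_{qn})_{q,n≥1} be real numbers such that ∑_{n≥1} a_{qn}² ≤ K q² for every q ≥ 1, and let (x_n)_{n≥1} be nonnegative reals with ∑_{n≥1} n⁴ x_n² < ∞. Then ∑_{n≥1} n² x_n ( ∑_{q≥1} |a_{qn}| x_q ) ≤ (K π²/6)^{1/2} ∑_{n≥1} n⁴ x_n². (Abstract form of Lemma 6.1: with x_n = ‖f_n^d‖_{L¹(S₂)} and a_{qn} the coefficients ∫₀¹ ∂_s[κ:λ(f^e) H_q] H_n ds, it yields ∑ n² ‖f_n^d‖ ‖I_{1n}‖ ≤ C ∑ n⁴ ‖f_n^d‖².) -/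
open Real

noncomputable section

/-- Cauchy–Schwarz inequality for `tsum` over `ℕ+`, with summability. -/
lemma tsum_CS {f g : ℕ+ → ℝ} (hf0 : ∀ i, 0 ≤ f i) (hg0 : ∀ i, 0 ≤ g i)
    (hf : Summable fun i => f i ^ 2) (hg : Summable fun i => g i ^ 2) :
    Summable (fun i => f i * g i) ∧
      (∑' i, f i * g i) ≤ Real.sqrt (∑' i, f i ^ 2) * Real.sqrt (∑' i, g i ^ 2) := by
  have hsum : Summable (fun i => f i * g i) := by
    apply Summable.of_nonneg_of_le (fun i => mul_nonneg (hf0 i) (hg0 i))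
      (fun i => ?_) ((hf.add hg).div_const 2)
    have := sq_nonneg (f i - g i)
    nlinarith
  refine ⟨hsum, Summable.tsum_le_of_sum_le hsum fun s => ?_⟩
  calc ∑ i ∈ s, f i * g i ≤ Real.sqrt (∑ i ∈ s, f i ^ 2) * Real.sqrt (∑ i ∈ s, g i ^ 2) :=
        Real.sum_mul_le_sqrt_mul_sqrt s f g
    _ ≤ _ := by
        gcongr <;> exact Summable.sum_le_tsum s (fun i _ => sq_nonneg _) (by assumption)

/-- Basel problem over `ℕ+`. -/
lemma hasSum_basel_pnat : HasSum (fun n : ℕ+ => (1 : ℝ) / (n : ℝ) ^ 2) (π ^ 2 / 6) := by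
  have h := hasSum_zeta_two
  have hinj : Function.Injective (fun n : ℕ+ => (n : ℕ)) := fun a b hab => PNat.coe_injective hab
  rw [← Function.Injective.hasSum_iff hinj] at h
  · exact h
  · intro n hn
    have : n = 0 := by
      by_contra h0
      exact hn ⟨⟨n, Nat.pos_of_ne_zero h0⟩, rfl⟩
    simp [this]

/-- Abstract form of Lemma 6.1: if ∑_n a_{qn}² ≤ Kq² for every q ≥ 1 and x_n ≥ 0 with
∑_n n⁴x_n² < ∞, then ∑_n n²x_n (∑_q |a_{qn}| x_q) ≤ (Kπ²/6)^{1/2} ∑_n n⁴x_n². -/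
theorem weighted_convolution_estimate
    (K : ℝ) (hK : 0 ≤ K)
    (a : ℕ+ → ℕ+ → ℝ) (x : ℕ+ → ℝ)
    (hx : ∀ n : ℕ+, 0 ≤ x n)
    (ha : ∀ q : ℕ+, Summable (fun n : ℕ+ => (a q n) ^ 2) ∧
      (∑' n : ℕ+, (a q n) ^ 2) ≤ K * (q : ℝ) ^ 2)
    (hsx : Summable fun n : ℕ+ => (n : ℝ) ^ 4 * (x n) ^ 2) :
    (∑' n : ℕ+, (n : ℝ) ^ 2 * x n * (∑' q : ℕ+, |a q n| * x q))
      ≤ Real.sqrt (K * π ^ 2 / 6) * ∑' n : ℕ+, (n : ℝ) ^ 4 * (x n) ^ 2 := by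
  set b : ℕ+ → ℝ := fun n => (n : ℝ) ^ 2 * x n with hb
  have hb0 : ∀ n, 0 ≤ b n := fun n => mul_nonneg (by positivity) (hx n)
  have hbsq : Summable fun n => b n ^ 2 := by
    convert hsx using 2 with n; simp [hb]; ring
  have hbtsum : (∑' n, b n ^ 2) = ∑' n : ℕ+, (n : ℝ) ^ 4 * (x n) ^ 2 := by
    congr 1 with n; simp [hb]; ring
  set S : ℝ := ∑' n : ℕ+, (n : ℝ) ^ 4 * (x n) ^ 2 with hS
  have hS0 : 0 ≤ S := tsum_nonneg fun n => by positivity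
  -- per-q inner estimate
  have hinner : ∀ q : ℕ+, Summable (fun n => |a q n| * b n) ∧
      (∑' n, |a q n| * b n) ≤ Real.sqrt K * (q : ℝ) * Real.sqrt S := by
    intro q
    have habs : Summable fun n => |a q n| ^ 2 := by simpa [sq_abs] using (ha q).1
    obtain ⟨h1, h2⟩ := tsum_CS (fun n => abs_nonneg _) hb0 habs hbsq
    refine ⟨h1, h2.trans ?_⟩
    rw [hbtsum]
    have : (∑' n, |a q n| ^ 2) ≤ K * (q : ℝ) ^ 2 := by
      simpa [sq_abs] using (ha q).2
    calc Real.sqrt (∑' n, |a q n| ^ 2) * Real.sqrt S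
        ≤ Real.sqrt (K * (q : ℝ) ^ 2) * Real.sqrt S := by gcongr
      _ = Real.sqrt K * (q : ℝ) * Real.sqrt S := by
          rw [Real.sqrt_mul hK, Real.sqrt_sq (by positivity)]
  -- summability of q ↦ q * x q and its bound
  have hq1 : Summable (fun q : ℕ+ => (1 : ℝ) / (q : ℝ) * ((q:ℝ)^2 * x q)) ∧
      (∑' q : ℕ+, (1:ℝ)/(q:ℝ) * ((q:ℝ)^2 * x q))
        ≤ Real.sqrt (∑' q : ℕ+, ((1:ℝ)/(q:ℝ))^2) * Real.sqrt (∑' q : ℕ+, ((q:ℝ)^2 * x q)^2) :=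
    tsum_CS (fun q => by positivity) (fun q => mul_nonneg (by positivity) (hx q))
      (by simpa [div_pow] using hasSum_basel_pnat.summable) hbsq
  have hqx_eq : (fun q : ℕ+ => (1 : ℝ) / (q : ℝ) * ((q:ℝ)^2 * x q))
      = fun q : ℕ+ => (q : ℝ) * x q := by
    funext q
    have hq0 : (q : ℝ) ≠ 0 := by positivity
    field_simp
  have hqx : Summable fun q : ℕ+ => (q : ℝ) * x q := hqx_eq ▸ hq1.1
  have hqxle : (∑' q : ℕ+, (q : ℝ) * x q) ≤ Real.sqrt (π ^ 2 / 6) * Real.sqrt S := by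
    have h2 := hq1.2
    rw [hqx_eq] at h2
    refine h2.trans ?_
    have e1 : (∑' q : ℕ+, ((1:ℝ)/(q:ℝ))^2) = π ^ 2 / 6 := by
      simpa [div_pow] using hasSum_basel_pnat.tsum_eq
    have e2 : (∑' q : ℕ+, ((q:ℝ)^2 * x q)^2) = S := by
      rw [← hbtsum]
    rw [e1, e2]
  -- product summability
  set F : ℕ+ × ℕ+ → ℝ := fun p => |a p.1 p.2| * x p.1 * b p.2 with hF
  have hF0 : ∀ p, 0 ≤ F p := fun p => mul_nonneg (mul_nonneg (abs_nonneg _) (hx _)) (hb0 _)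
  have hFq : ∀ q : ℕ+, Summable fun n => F (q, n) := by
    intro q
    have := ((hinner q).1.mul_left (x q))
    simpa [hF, mul_comm, mul_assoc, mul_left_comm] using this
  have hFsum : Summable F := by
    rw [summable_prod_of_nonneg hF0]
    refine ⟨hFq, ?_⟩
    apply Summable.of_nonneg_of_le (fun q => tsum_nonneg fun n => hF0 _) (fun q => ?_)
      ((hqx.mul_left (Real.sqrt K * Real.sqrt S)))
    have : (∑' n, F (q, n)) = x q * ∑' n, |a q n| * b n := by
      rw [← tsum_mul_left]; congr 1 with n; simp [hF]; ring
    rw [this]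
    calc x q * ∑' n, |a q n| * b n ≤ x q * (Real.sqrt K * (q : ℝ) * Real.sqrt S) := by
          have := (hinner q).2
          exact mul_le_mul_of_nonneg_left this (hx q)
      _ = Real.sqrt K * Real.sqrt S * ((q:ℝ) * x q) := by ring
  -- rewrite LHS as double sum and swap
  have hLHS : (∑' n : ℕ+, (n : ℝ) ^ 2 * x n * (∑' q : ℕ+, |a q n| * x q))
      = ∑' n : ℕ+, ∑' q : ℕ+, F (q, n) := by
    congr 1 with n
    rw [← tsum_mul_left]
    congr 1 with q
    simp [hF, hb]; ring
  rw [hLHS, Summable.tsum_comm (f := fun q n : ℕ+ => F (q, n)) hFsum]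
  -- bound the swapped sum
  have key : (∑' q : ℕ+, ∑' n : ℕ+, F (q, n))
      ≤ ∑' q : ℕ+, Real.sqrt K * Real.sqrt S * ((q:ℝ) * x q) := by
    apply Summable.tsum_le_tsum _ ((summable_prod_of_nonneg hF0).1 hFsum).2
      (hqx.mul_left _)
    intro q
    have : (∑' n, F (q, n)) = x q * ∑' n, |a q n| * b n := by
      rw [← tsum_mul_left]; congr 1 with n; simp [hF]; ring
    rw [this]
    calc x q * ∑' n, |a q n| * b n ≤ x q * (Real.sqrt K * (q : ℝ) * Real.sqrt S) :=
          mul_le_mul_of_nonneg_left (hinner q).2 (hx q)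
      _ = Real.sqrt K * Real.sqrt S * ((q:ℝ) * x q) := by ring
  refine key.trans ?_
  rw [tsum_mul_left]
  calc Real.sqrt K * Real.sqrt S * (∑' q : ℕ+, (q:ℝ) * x q)
      ≤ Real.sqrt K * Real.sqrt S * (Real.sqrt (π ^ 2 / 6) * Real.sqrt S) := by
        apply mul_le_mul_of_nonneg_left hqxle (by positivity)
    _ = (Real.sqrt K * Real.sqrt (π ^ 2 / 6)) * (Real.sqrt S * Real.sqrt S) := by ring
    _ = Real.sqrt (K * π ^ 2 / 6) * S := by
        rw [← Real.sqrt_mul hK, Real.mul_self_sqrt hS0, mul_div_assoc]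
end
end
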